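/- For every nonnegative integer L and integer N ≥ 0 of the same parity as L with N ≤ L, the coefficient a_{LN}(k) = ((2L+1)/2) ∫_{-1}^1 J_N(kx) P_L(x) dx equals (√π 2^{-2L-2} (2L+1) k^L i^{L-N} (1+(-1)^{L+N}) / Γ(L+3/2)) · binomial(L, (L-N)/2) · ₂F₃(L/2+1/2, L/2+1; L+3/2, (L-N)/2+1, (L+N)/2+1; -k²/4). -/

import Mathlib

/-- Real Bessel function of the first kind of nonnegative integer order. -/
noncomputable def besselJR (n : ℕ) (x : ℝ) : ℝ :=
  ∑' m : ℕ, (-1 : ℝ) ^ m / ((m.factorial : ℝ) * ((m + n).factorial : ℝ)) * (x / 2) ^ (2 * m + n)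

/-- The Legendre polynomials, defined by the three-term recurrence
`(n+2) P_{n+2} = (2n+3) x P_{n+1} - (n+1) P_n` with `P_0 = 1`, `P_1 = X`. -/
noncomputable def legP : ℕ → Polynomial ℝ
  | 0 => 1
  | 1 => Polynomial.X
  | (n + 2) =>
      Polynomial.C ((n + 2 : ℝ)⁻¹) *
        ((2 * (n : ℝ) + 3) • (Polynomial.X * legP (n + 1)) - ((n : ℝ) + 1) • legP n)

/-- The Fourier–Legendre coefficient of `x ↦ J_N(k x)` on `[-1,1]`. -/
noncomputable def aLN (L N : ℕ) (k : ℝ) : ℝ :=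
  ((2 * (L : ℝ) + 1) / 2) * ∫ x in (-1:ℝ)..1, besselJR N (k * x) * (legP L).eval x

/-- The generalized hypergeometric series `ₚF_q(a; b; z)` with upper parameter list `a`
and lower parameter list `b`, `Σ_{k≥0} ∏(aᵢ)_k / (∏(bⱼ)_k k!) z^k`. -/
noncomputable def hyp (a b : List ℂ) (z : ℂ) : ℂ :=
  ∑' k : ℕ, ((a.map (fun p => (ascPochhammer ℂ k).eval p)).prod /
    (b.map (fun p => (ascPochhammer ℂ k).eval p)).prod) * z ^ k / (k.factorial : ℂ)

/-!
Expanding `J_N(kx) = Σ_m c_m x^(2m+N)` and integrating term by term (the series converges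
uniformly on `[-1, 1]`) turns `a_LN` into a series of Legendre moments `∫ x^n P_L`. The three-term
recurrence shows that these vanish for `n < L` and for `n + L` odd, and that
`∫ x^(L+2a) P_L = 2 (L+2a)! / ((2a)‼ (2L+2a+1)‼)`. Writing `L = N + 2a`, the surviving terms are
indexed by `m = a + j`, and after expressing the Pochhammer symbols and `Γ(L + 3/2)` through
factorials and double factorials the `j`-th term is the `j`-th term of the `₂F₃` series.
-/

open scoped Nat

theorem Complex.Gamma_nat_add_three_halves (n : ℕ) :
    Complex.Gamma ((n : ℂ) + 3 / 2) = (2 * n + 1 : ℕ)‼ * Real.sqrt Real.pi / 2 ^ (n + 1) := by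
  have h := congrArg ((↑) : ℝ → ℂ) (Real.Gamma_nat_add_one_add_half n)
  rw [← Complex.Gamma_ofReal] at h
  push_cast at h
  rw [← h]
  congr 1
  ring

theorem ascPochhammer_eval_nat_add_three_halves (n j : ℕ) :
    (ascPochhammer ℂ j).eval ((n : ℂ) + 3 / 2) =
      (2 * n + 2 * j + 1 : ℕ)‼ / (2 ^ j * (2 * n + 1 : ℕ)‼) := by
  have hpos : ((2 * n + 1 : ℕ)‼ : ℂ) ≠ 0 := Nat.cast_ne_zero.2 (Nat.doubleFactorial_pos _).ne'
  induction j with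
  | zero => simp [hpos]
  | succ j ih =>
    rw [ascPochhammer_succ_eval, ih, show 2 * n + 2 * (j + 1) + 1 = (2 * n + 2 * j + 1) + 2 by ring,
      Nat.doubleFactorial_add_two]
    push_cast
    field_simp
    ring

theorem ascPochhammer_eval_nat_add_one {K : Type*} [Field K] [CharZero K] (c j : ℕ) :
    (ascPochhammer K j).eval ((c : K) + 1) = (c + j)! / c ! := by
  rw [← factorial_mul_ascPochhammer K c j,
    mul_div_cancel_left₀ _ (Nat.cast_ne_zero.2 c.factorial_ne_zero)]

theorem ascPochhammer_eval_half_mul_eval_half_add_one {K : Type*} [Field K] [CharZero K] (z : K)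
    (j : ℕ) :
    (ascPochhammer K j).eval (z / 2) * (ascPochhammer K j).eval ((z + 1) / 2) =
      (ascPochhammer K (2 * j)).eval z / 4 ^ j := by
  rw [eq_div_iff (pow_ne_zero _ (by norm_num))]
  induction j with
  | zero => simp
  | succ j ih =>
    rw [show 2 * (j + 1) = 2 * j + 1 + 1 by ring, ascPochhammer_succ_eval, ascPochhammer_succ_eval,
      ascPochhammer_succ_eval, ascPochhammer_succ_eval, ← ih]
    push_cast
    ring

noncomputable def legendreMoment (n L : ℕ) : ℝ := ∫ x in (-1 : ℝ)..1, x ^ n * (legP L).eval x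

theorem legP_eval_add_two (n : ℕ) (x : ℝ) :
    (legP (n + 2)).eval x =
      ((2 * n + 3) * x * (legP (n + 1)).eval x - (n + 1) * (legP n).eval x) / (n + 2) := by
  simp only [legP, Polynomial.eval_mul, Polynomial.eval_C, Polynomial.eval_sub,
    Polynomial.eval_smul, Polynomial.eval_X, smul_eq_mul]
  ring

theorem intervalIntegrable_pow_mul_legP (n L : ℕ) :
    IntervalIntegrable (fun x : ℝ => x ^ n * (legP L).eval x) MeasureTheory.volume (-1) 1 :=
  ((continuous_pow n).mul (legP L).continuous).intervalIntegrable _ _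

theorem legendreMoment_add_two (n L : ℕ) :
    legendreMoment n (L + 2) =
      ((2 * L + 3) * legendreMoment (n + 1) (L + 1) - (L + 1) * legendreMoment n L) / (L + 2) := by
  have h (x : ℝ) : x ^ n * (legP (L + 2)).eval x =
      ((2 * L + 3) * (x ^ (n + 1) * (legP (L + 1)).eval x) - (L + 1) * (x ^ n * (legP L).eval x))
        / (L + 2) := by
    rw [legP_eval_add_two]; ring
  simp only [legendreMoment, h, intervalIntegral.integral_div]
  rw [intervalIntegral.integral_sub ((intervalIntegrable_pow_mul_legP _ _).const_mul _)
    ((intervalIntegrable_pow_mul_legP _ _).const_mul _), intervalIntegral.integral_const_mul,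
    intervalIntegral.integral_const_mul]

theorem legendreMoment_zero (n : ℕ) : legendreMoment n 0 = (1 - (-1) ^ (n + 1)) / (n + 1) := by
  simp [legendreMoment, legP, integral_pow]

theorem legendreMoment_one (n : ℕ) : legendreMoment n 1 = legendreMoment (n + 1) 0 := by
  simp [legendreMoment, legP, pow_succ]

theorem legendreMoment_eq_zero_of_odd {n L : ℕ} (h : Odd (n + L)) : legendreMoment n L = 0 := by
  induction L using Nat.strong_induction_on generalizing n with
  | _ L ih =>
    match L with
    | 0 => rw [legendreMoment_zero, Even.neg_one_pow (by simpa [parity_simps] using h)]; simp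
    | 1 =>
      rw [legendreMoment_one, legendreMoment_zero,
        Even.neg_one_pow (by simpa [parity_simps] using h)]
      simp
    | M + 2 =>
      rw [legendreMoment_add_two, ih (M + 1) (by omega) (by convert h using 1; ring),
        ih M (by omega) (by simpa [← add_assoc, Nat.odd_add, parity_simps] using h)]
      simp

theorem legendreMoment_self_add_two_mul (L a : ℕ) :
    legendreMoment (L + 2 * a) L = 2 * (L + 2 * a)! / ((2 * a)‼ * (2 * L + 2 * a + 1)‼) := by
  induction L using Nat.strong_induction_on generalizing a with
  | _ L ih =>
    match L with
    | 0 =>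
      rw [legendreMoment_zero, Odd.neg_one_pow (by simp), zero_add, mul_zero, zero_add,
        mul_comm ((2 * a)‼ : ℝ), ← Nat.cast_mul, ← Nat.factorial_eq_mul_doubleFactorial,
        Nat.factorial_succ]
      push_cast
      field_simp
      ring
    | 1 =>
      rw [legendreMoment_one, legendreMoment_zero, Odd.neg_one_pow (by rw [Nat.odd_iff]; omega),
        show 2 * 1 + 2 * a + 1 = 2 * a + 1 + 2 by ring, Nat.doubleFactorial_add_two,
        show 1 + 2 * a = 2 * a + 1 by ring, Nat.factorial_eq_mul_doubleFactorial]
      push_cast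
      field_simp
      ring
    | M + 2 =>
      have h₁ := ih (M + 1) (by omega) (a + 1)
      have h₀ := ih M (by omega) (a + 1)
      rw [show M + 1 + 2 * (a + 1) = M + 2 + 2 * a + 1 by ring, Nat.factorial_succ,
        show 2 * (M + 1) + 2 * (a + 1) + 1 = 2 * M + 2 * a + 3 + 2 by ring] at h₁
      rw [show M + 2 * (a + 1) = M + 2 + 2 * a by ring,
        show 2 * M + 2 * (a + 1) + 1 = 2 * M + 2 * a + 3 by ring] at h₀
      rw [legendreMoment_add_two, h₁, h₀, show 2 * (a + 1) = 2 * a + 2 by ring,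
        show 2 * (M + 2) + 2 * a + 1 = 2 * M + 2 * a + 3 + 2 by ring, Nat.doubleFactorial_add_two,
        Nat.doubleFactorial_add_two (2 * M + 2 * a + 3)]
      push_cast
      field_simp
      ring

theorem legendreMoment_eq_zero_of_lt {n L : ℕ} (h : n < L) : legendreMoment n L = 0 := by
  induction L using Nat.strong_induction_on generalizing n with
  | _ L ih =>
    match L, h with
    | 1, _ => rw [show n = 0 by omega, legendreMoment_one, legendreMoment_zero]; norm_num
    | M + 2, _ =>
      rw [legendreMoment_add_two, div_eq_zero_iff, sub_eq_zero]
      left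
      rcases lt_trichotomy n M with hn | rfl | hn
      · rw [ih (M + 1) (by omega) (by omega), ih M (by omega) hn, mul_zero, mul_zero]
      · have h₁ := legendreMoment_self_add_two_mul (n + 1) 0
        have h₀ := legendreMoment_self_add_two_mul n 0
        simp only [mul_zero, add_zero, Nat.doubleFactorial, Nat.cast_one, one_mul] at h₁ h₀
        rw [h₁, h₀, show 2 * (n + 1) + 1 = 2 * n + 1 + 2 by ring, Nat.doubleFactorial_add_two,
          Nat.factorial_succ]
        push_cast
        field_simp
        ring
      · obtain rfl : n = M + 1 := by omega
        rw [legendreMoment_eq_zero_of_odd (by simp [parity_simps]),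
          legendreMoment_eq_zero_of_odd (by simp [parity_simps]), mul_zero, mul_zero]

theorem intervalIntegral_tsum_mul_pow_mul {c : ℕ → ℝ} (hc : Summable fun m => |c m|) (e : ℕ → ℕ)
    {g : ℝ → ℝ} (hg : Continuous g) :
    ∫ x in (-1 : ℝ)..1, (∑' m, c m * x ^ e m) * g x =
      ∑' m, c m * ∫ x in (-1 : ℝ)..1, x ^ e m * g x := by
  let K : TopologicalSpace.Compacts ℝ := ⟨Set.uIcc (-1) 1, isCompact_uIcc⟩
  let f (m : ℕ) : C(ℝ, ℝ) := ⟨fun x => c m * (x ^ e m * g x), by fun_prop⟩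
  have hbound (m : ℕ) : ‖(f m).restrict K‖ ≤ |c m| * ‖(ContinuousMap.mk g hg).restrict K‖ := by
    refine (ContinuousMap.norm_le _ (by positivity)).2 fun x => ?_
    have hx : (x : ℝ) ∈ Set.uIcc (-1 : ℝ) 1 := x.2
    rw [Set.uIcc_of_le (by norm_num)] at hx
    have hgx := ContinuousMap.norm_coe_le_norm ((ContinuousMap.mk g hg).restrict K) x
    simp only [ContinuousMap.restrict_apply, ContinuousMap.coe_mk, Real.norm_eq_abs, abs_mul,
      abs_pow, f] at hgx ⊢
    gcongr
    exact (mul_le_of_le_one_left (abs_nonneg _) (pow_le_one₀ (abs_nonneg _) (abs_le.2 hx))).trans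
      hgx
  have hsum : Summable fun m => ‖(f m).restrict K‖ :=
    .of_nonneg_of_le (fun _ => norm_nonneg _) hbound (hc.mul_right _)
  simp only [← tsum_mul_right, mul_assoc]
  have h := intervalIntegral.tsum_intervalIntegral_eq_of_summable_norm hsum
  simp only [f, ContinuousMap.coe_mk, intervalIntegral.integral_const_mul] at h
  exact h.symm

noncomputable def besselCoeff (N : ℕ) (k : ℝ) (m : ℕ) : ℝ :=
  (-1) ^ m / (m ! * (m + N)!) * (k / 2) ^ (2 * m + N)

theorem besselJR_mul (N : ℕ) (k x : ℝ) :
    besselJR N (k * x) = ∑' m, besselCoeff N k m * x ^ (2 * m + N) := by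
  simp only [besselJR, besselCoeff, mul_div_right_comm k x, mul_pow, mul_assoc]

theorem summable_abs_besselCoeff (N : ℕ) (k : ℝ) : Summable fun m => |besselCoeff N k m| := by
  refine .of_nonneg_of_le (fun _ => abs_nonneg _) (fun m => ?_)
    (((Real.summable_pow_div_factorial ((|k| / 2) ^ 2)).mul_left ((|k| / 2) ^ N)))
  have hfac : (1 : ℝ) ≤ (m + N)! := by exact_mod_cast (m + N).factorial_pos
  calc |besselCoeff N k m| = (|k| / 2) ^ N * (((|k| / 2) ^ 2) ^ m / m !) / (m + N)! := by
        rw [besselCoeff, abs_mul, abs_div, abs_pow, abs_pow, abs_neg, abs_one, one_pow,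
          abs_of_pos (by positivity : (0 : ℝ) < m ! * (m + N)!), abs_div, abs_two, pow_add, pow_mul]
        ring
    _ ≤ _ := div_le_self (by positivity) hfac

theorem aLN_eq_tsum (L N : ℕ) (k : ℝ) :
    aLN L N k = (2 * L + 1) / 2 * ∑' m, besselCoeff N k m * legendreMoment (2 * m + N) L := by
  simp only [aLN, besselJR_mul]
  rw [intervalIntegral_tsum_mul_pow_mul (summable_abs_besselCoeff N k) _ (legP L).continuous]
  rfl

theorem aLN_eq_tsum_add {L N a : ℕ} (h : L = N + 2 * a) (k : ℝ) :
    aLN L N k = (2 * L + 1) / 2 * ∑' j, besselCoeff N k (a + j) * legendreMoment (L + 2 * j) L := by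
  rw [aLN_eq_tsum, ← (add_right_injective a).tsum_eq]
  · simp only [show ∀ j, 2 * (a + j) + N = L + 2 * j from fun j => by omega]
  · intro m hm
    refine ⟨m - a, Nat.add_sub_cancel' ?_⟩
    by_contra hma
    exact hm (mul_eq_zero_of_right _ (legendreMoment_eq_zero_of_lt (by omega)))

theorem aLN_constant_eq {L N a : ℕ} (h : L = N + 2 * a) (k : ℝ) :
    (Real.sqrt Real.pi : ℂ) * 2 ^ (-(2 * (L : ℤ)) - 2) * (2 * (L : ℂ) + 1) * (k : ℂ) ^ L *
          Complex.I ^ ((L : ℤ) - (N : ℤ)) * (1 + (-1 : ℂ) ^ (L + N)) /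
          Complex.Gamma ((L : ℂ) + 3 / 2) * (L.choose ((L - N) / 2) : ℂ) =
      (-1) ^ a * k ^ L * (2 * L + 1) * L ! / (2 ^ L * (2 * L + 1)‼ * a ! * (a + N)!) := by
  rw [Complex.Gamma_nat_add_three_halves, show (L : ℤ) - N = (2 * a : ℕ) by omega, zpow_natCast,
    pow_mul, Complex.I_sq, show L + N = 2 * (N + a) by omega, pow_mul, neg_one_sq, one_pow,
    show -(2 * (L : ℤ)) - 2 = -(2 * L + 2 : ℕ) by push_cast; ring, zpow_neg, zpow_natCast,
    show (L - N) / 2 = a by omega, Nat.cast_choose ℂ (show a ≤ L by omega),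
    show L - a = a + N by omega]
  have hpi : (Real.sqrt Real.pi : ℂ) ≠ 0 :=
    Complex.ofReal_ne_zero.2 (Real.sqrt_pos.2 Real.pi_pos).ne'
  field_simp
  ring

theorem aLN_hyp_coeff_eq {L N a : ℕ} (h : L = N + 2 * a) (j : ℕ) :
    (ascPochhammer ℂ j).eval ((L : ℂ) / 2 + 1 / 2) * (ascPochhammer ℂ j).eval ((L : ℂ) / 2 + 1) /
        ((ascPochhammer ℂ j).eval ((L : ℂ) + 3 / 2) *
          ((ascPochhammer ℂ j).eval (((L : ℂ) - N) / 2 + 1) *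
            (ascPochhammer ℂ j).eval (((L : ℂ) + N) / 2 + 1))) =
      (L + 2 * j)! * (2 * L + 1)‼ * a ! * (a + N)! /
        (L ! * 2 ^ j * (2 * L + 2 * j + 1)‼ * (a + j)! * (a + N + j)!) := by
  rw [show (L : ℂ) / 2 + 1 / 2 = ((L : ℂ) + 1) / 2 by ring,
    show (L : ℂ) / 2 + 1 = ((L : ℂ) + 1 + 1) / 2 by ring,
    ascPochhammer_eval_half_mul_eval_half_add_one, ascPochhammer_eval_nat_add_three_halves,
    show ((L : ℂ) - N) / 2 + 1 = (a : ℂ) + 1 by rw [h]; push_cast; ring,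
    show ((L : ℂ) + N) / 2 + 1 = (a + N : ℕ) + 1 by rw [h]; push_cast; ring,
    ascPochhammer_eval_nat_add_one, ascPochhammer_eval_nat_add_one, ascPochhammer_eval_nat_add_one,
    show (4 : ℂ) ^ j = 2 ^ j * 2 ^ j by rw [← mul_pow]; norm_num]
  field_simp [Nat.factorial_ne_zero, (Nat.doubleFactorial_pos _).ne']

theorem aLN_eq (L N : ℕ) (hNL : N ≤ L) (hpar : (L + N) % 2 = 0) (k : ℝ) :
    (aLN L N k : ℂ) =
      (Real.sqrt Real.pi : ℂ) * 2 ^ (-(2 * (L : ℤ)) - 2) * (2 * (L : ℂ) + 1) * (k : ℂ) ^ L *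
          Complex.I ^ ((L : ℤ) - (N : ℤ)) * (1 + (-1 : ℂ) ^ (L + N)) /
          Complex.Gamma ((L : ℂ) + 3 / 2) * (L.choose ((L - N) / 2) : ℂ) *
        hyp [(L : ℂ) / 2 + 1 / 2, (L : ℂ) / 2 + 1]
          [(L : ℂ) + 3 / 2, ((L : ℂ) - (N : ℂ)) / 2 + 1, ((L : ℂ) + (N : ℂ)) / 2 + 1]
          (-(k : ℂ) ^ 2 / 4) := by
  obtain ⟨a, ha⟩ : ∃ a, L = N + 2 * a := ⟨(L - N) / 2, by omega⟩
  rw [aLN_constant_eq ha, aLN_eq_tsum_add ha, hyp, Complex.ofReal_mul, Complex.ofReal_tsum,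
    ← tsum_mul_left, ← tsum_mul_left]
  refine tsum_congr fun j => ?_
  simp only [List.map_cons, List.map_nil, List.prod_cons, List.prod_nil, mul_one]
  rw [aLN_hyp_coeff_eq ha, besselCoeff, legendreMoment_self_add_two_mul,
    Nat.doubleFactorial_two_mul, show 2 * (a + j) + N = L + 2 * j by omega,
    show a + j + N = a + N + j by ring]
  push_cast
  rw [div_pow, div_pow, neg_pow, show (4 : ℂ) ^ j = 2 ^ j * 2 ^ j by rw [← mul_pow]; norm_num]
  field_simp [Nat.factorial_ne_zero, (Nat.doubleFactorial_pos _).ne']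
  ring
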